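/- Let (Ω, F, (F_j)_{j≥0}, P) be a filtered probability space and let N ≥ 1 be an integer. For each i = 1, …, N let (M^{(i)}_j)_{j≥1} be a square-integrable process adapted to the filtration, and suppose there are real constants θ_{i,l} (1 ≤ i, l ≤ N) such that E[ | E[ M^{(i)}_j · M^{(l)}_j | F_{j−1} ] − θ_{i,l} | ] → 0 as j → ∞ for all i, l. Let p₁, …, p_N < 1/2 and K > 0 be real constants, and for each n ≥ 1 let b^{(i)}_{j,n} (1 ≤ j ≤ n, 1 ≤ i ≤ N) be real numbers with |b^{(i)}_{j,n}| ≤ K·(n/(j+1))^{p_i}. Assume moreover that for all i, l the limit B_{i,l} := lim_{n→∞} (1/n)·∑_{j=1}^{n} b^{(i)}_{j,n}·b^{(l)}_{j,n} exists. Then the conditional variance sums converge in L¹: E[ | (1/n)·∑_{j=1}^{n} E[ ( ∑_{i=1}^{N} b^{(i)}_{j,n}·M^{(i)}_j )² | F_{j−1} ] − ∑_{i=1}^{N} ∑_{l=1}^{N} B_{i,l}·θ_{i,l} | ] → 0 as n → ∞. -/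

import Mathlib

open MeasureTheory Filter Finset Topology

/-!
Expanding the square, `E[(∑ᵢ bᵢ Mᵢ)² | F_{j-1}] = ∑_{i,l} bᵢ b_l E[Mᵢ M_l | F_{j-1}]`, so the
`(i, l)` part of the error is
`((1/n) ∑_j bᵢ b_l - B_{il}) θ_{il} + (1/n) ∑_j bᵢ b_l (E[Mᵢ M_l | F_{j-1}] - θ_{il})`.
The first summand tends to zero by assumption. The `L¹` norm of the second is at most
`(K²/n) ∑_j (n/(j+1))^q ε_j` with `q = pᵢ + p_l < 1` and
`ε_j = E|E[Mᵢ M_l | F_{j-1}] - θ_{il}| → 0`.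
Since `q < 1`, the weights `(1/n) (n/(j+1))^q` have bounded row sums (compare with `∫ x^(-q) dx`)
and columns tending to zero, so this average tends to zero as in the Silverman–Toeplitz theorem.
-/

theorem sum_Icc_div_add_one_rpow_le {r : ℝ} (hr0 : 0 ≤ r) (hr1 : r < 1) (n : ℕ) :
    ∑ j ∈ Icc 1 n, ((n : ℝ) / (j + 1)) ^ r ≤ (n + 1) / (1 - r) := by
  have hr : 0 < 1 - r := by linarith
  have hsum : ∑ j ∈ Icc 1 n, ((j : ℝ) + 1) ^ (-r) ≤ ((n : ℝ) + 1) ^ (1 - r) / (1 - r) := by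
    have hanti : AntitoneOn (fun x : ℝ => x ^ (-r)) (Set.Icc ((1 : ℕ) : ℝ) ((n + 1 : ℕ) : ℝ)) :=
      (Real.antitoneOn_rpow_Ioi_of_exponent_nonpos (by linarith)).mono
        fun x hx => lt_of_lt_of_le one_pos (by exact_mod_cast hx.1)
    calc ∑ j ∈ Icc 1 n, ((j : ℝ) + 1) ^ (-r)
        = ∑ j ∈ Ico 1 (n + 1), (((j + 1 : ℕ) : ℝ)) ^ (-r) := by
          rw [Ico_add_one_right_eq_Icc]; push_cast; rfl
      _ ≤ ∫ x in ((1 : ℕ) : ℝ)..((n + 1 : ℕ) : ℝ), x ^ (-r) :=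
          hanti.sum_le_integral_Ico (by omega)
      _ = (((n : ℝ) + 1) ^ (1 - r) - 1) / (1 - r) := by
          rw [integral_rpow (Or.inl (by linarith))]; push_cast
          rw [Real.one_rpow, neg_add_eq_sub]
      _ ≤ ((n : ℝ) + 1) ^ (1 - r) / (1 - r) := by gcongr; linarith
  calc ∑ j ∈ Icc 1 n, ((n : ℝ) / (j + 1)) ^ r
      ≤ ∑ j ∈ Icc 1 n, ((n : ℝ) + 1) ^ r * ((j : ℝ) + 1) ^ (-r) := by
        gcongr with j
        rw [Real.rpow_neg (by positivity), ← div_eq_mul_inv,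
          ← Real.div_rpow (by positivity) (by positivity)]
        gcongr; linarith
    _ ≤ ((n : ℝ) + 1) ^ r * (((n : ℝ) + 1) ^ (1 - r) / (1 - r)) := by
        rw [← mul_sum]; gcongr
    _ = (n + 1) / (1 - r) := by
        rw [← mul_div_assoc, ← Real.rpow_add (by positivity), add_sub_cancel, Real.rpow_one]

theorem tendsto_one_div_mul_div_add_one_rpow {r : ℝ} (hr : r < 1) (j : ℕ) :
    Tendsto (fun n : ℕ => 1 / (n : ℝ) * ((n : ℝ) / (j + 1)) ^ r) atTop (𝓝 0) := by
  have hpow : Tendsto (fun n : ℕ => (n : ℝ) ^ (r - 1)) atTop (𝓝 0) := by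
    simpa [Function.comp_def, neg_sub] using
      (tendsto_rpow_neg_atTop (by linarith : 0 < 1 - r)).comp tendsto_natCast_atTop_atTop
  have heq : (fun n : ℕ => (n : ℝ) ^ (r - 1) * (((j : ℝ) + 1) ^ r)⁻¹) =ᶠ[atTop]
      fun n : ℕ => 1 / (n : ℝ) * ((n : ℝ) / (j + 1)) ^ r := by
    filter_upwards [eventually_gt_atTop 0] with n hn
    have hn' : (0 : ℝ) < n := by exact_mod_cast hn
    rw [Real.div_rpow hn'.le (by positivity), Real.rpow_sub_one hn'.ne']
    ring
  simpa using (hpow.mul_const _).congr' heq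

theorem rpow_le_two_rpow_mul_rpow {x q r : ℝ} (hx : 1 / 2 ≤ x) (hqr : q ≤ r) :
    x ^ q ≤ 2 ^ (r - q) * x ^ r := by
  have hx0 : 0 < x := by linarith
  calc x ^ q = x ^ (q - r) * x ^ r := by rw [← Real.rpow_add hx0, sub_add_cancel]
    _ ≤ (1 / 2) ^ (q - r) * x ^ r :=
        mul_le_mul_of_nonneg_right (Real.rpow_le_rpow_of_nonpos (by norm_num) hx (by linarith))
          (by positivity)
    _ = 2 ^ (r - q) * x ^ r := by
        rw [one_div, Real.inv_rpow (by norm_num), ← Real.rpow_neg (by norm_num), neg_sub]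

theorem abs_mul_le_mul_rpow_add {x y K L t p q : ℝ} (ht : 0 < t) (hx : |x| ≤ K * t ^ p)
    (hy : |y| ≤ L * t ^ q) : |x * y| ≤ K * L * t ^ (p + q) := by
  rw [abs_mul, Real.rpow_add ht]
  calc |x| * |y| ≤ K * t ^ p * (L * t ^ q) :=
        mul_le_mul hx hy (abs_nonneg y) ((abs_nonneg x).trans hx)
    _ = K * L * (t ^ p * t ^ q) := by ring

theorem tendsto_sum_mul_of_tendsto_zero {s : ℕ → Finset ℕ} {w : ℕ → ℕ → ℝ} {ε : ℕ → ℝ} {C : ℝ}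
    (hw0 : ∀ n j, 0 ≤ w n j) (hrow : ∀ n, ∑ j ∈ s n, w n j ≤ C)
    (hcol : ∀ j, Tendsto (fun n => w n j) atTop (𝓝 0))
    (hε0 : ∀ j, 0 ≤ ε j) (hε : Tendsto ε atTop (𝓝 0)) :
    Tendsto (fun n => ∑ j ∈ s n, w n j * ε j) atTop (𝓝 0) := by
  refine tendsto_order.2 ⟨fun a ha => Eventually.of_forall fun n =>
    ha.trans_le (sum_nonneg fun j _ => mul_nonneg (hw0 n j) (hε0 j)), fun δ hδ => ?_⟩
  set η := δ / (2 * (|C| + 1))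
  have hη : 0 < η := by positivity
  have hCη : C * η ≤ δ / 2 := by
    calc C * η ≤ (|C| + 1) * η := by gcongr; linarith [le_abs_self C]
      _ = δ / 2 := by simp only [η]; field_simp
  obtain ⟨m, hm⟩ := eventually_atTop.1 (hε.eventually (gt_mem_nhds hη))
  have hhead : Tendsto (fun n => ∑ j ∈ range m, w n j * ε j) atTop (𝓝 0) := by
    simpa using tendsto_finsetSum _ fun j _ => (hcol j).mul_const (ε j)
  filter_upwards [hhead.eventually (gt_mem_nhds (half_pos hδ))] with n hn
  calc ∑ j ∈ s n, w n j * ε j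
      ≤ ∑ j ∈ s n, ((if j < m then w n j * ε j else 0) + w n j * η) := by
        refine sum_le_sum fun j _ => ?_
        split_ifs with hj
        · linarith [mul_nonneg (hw0 n j) hη.le]
        · simpa using mul_le_mul_of_nonneg_left (hm j (not_lt.1 hj)).le (hw0 n j)
    _ = ∑ j ∈ (s n).filter (· < m), w n j * ε j + (∑ j ∈ s n, w n j) * η := by
        rw [sum_add_distrib, sum_filter, sum_mul]
    _ ≤ ∑ j ∈ range m, w n j * ε j + C * η := by
        gcongr ?_ + ?_
        · exact sum_le_sum_of_subset_of_nonneg (fun j hj => mem_range.2 (mem_filter.1 hj).2)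
            fun j _ _ => mul_nonneg (hw0 n j) (hε0 j)
        · exact mul_le_mul_of_nonneg_right (hrow n) hη.le
    _ < δ := by linarith

theorem tendsto_one_div_mul_sum_abs_mul_of_abs_le_rpow {q C : ℝ} (hq : q < 1) {a : ℕ → ℕ → ℝ}
    (ha : ∀ n j : ℕ, 1 ≤ j → j ≤ n → |a n j| ≤ C * ((n : ℝ) / (j + 1)) ^ q)
    {ε : ℕ → ℝ} (hε0 : ∀ j, 0 ≤ ε j) (hε : Tendsto ε atTop (𝓝 0)) :
    Tendsto (fun n : ℕ => 1 / (n : ℝ) * ∑ j ∈ Icc 1 n, |a n j| * ε j) atTop (𝓝 0) := by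
  -- `n/(j+1) ≥ 1/2` lets us trade `q` for the nonnegative exponent needed in the row-sum bound.
  set r := max q 0
  have hr1 : r < 1 := max_lt hq one_pos
  have hrow : ∀ n : ℕ, ∑ j ∈ Icc 1 n, 1 / (n : ℝ) * ((n : ℝ) / (j + 1)) ^ r ≤ 2 / (1 - r) := by
    intro n
    rcases Nat.eq_zero_or_pos n with rfl | hn
    · simpa using div_nonneg zero_le_two (sub_nonneg.2 hr1.le)
    have hn1 : (1 : ℝ) ≤ n := by exact_mod_cast hn
    rw [← mul_sum]
    calc 1 / (n : ℝ) * ∑ j ∈ Icc 1 n, ((n : ℝ) / (j + 1)) ^ r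
        ≤ 1 / (n : ℝ) * ((n + 1) / (1 - r)) := by
          gcongr; exact sum_Icc_div_add_one_rpow_le (le_max_right q 0) hr1 n
      _ ≤ 2 / (1 - r) := by
          rw [← mul_div_assoc, div_le_div_iff_of_pos_right (by linarith)]
          rw [div_mul_eq_mul_div, one_mul, div_le_iff₀ (by positivity)]; linarith
  have hweighted := tendsto_sum_mul_of_tendsto_zero (fun n j => by positivity) hrow
    (tendsto_one_div_mul_div_add_one_rpow hr1) hε0 hε
  refine squeeze_zero
    (fun n => mul_nonneg (by positivity) (sum_nonneg fun j _ => mul_nonneg (abs_nonneg _) (hε0 j)))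
    (fun n => ?_) (by simpa only [mul_zero] using hweighted.const_mul (C * 2 ^ (r - q)))
  rw [mul_sum, mul_sum]
  refine sum_le_sum fun j hj => ?_
  obtain ⟨hj1, hjn⟩ := mem_Icc.1 hj
  have hx : 1 / 2 ≤ (n : ℝ) / (j + 1) := by
    rw [div_le_div_iff₀ (by norm_num) (by positivity)]
    have hjn' : (j : ℝ) ≤ n := by exact_mod_cast hjn
    have hj1' : (1 : ℝ) ≤ j := by exact_mod_cast hj1
    linarith
  have hC : 0 ≤ C := nonneg_of_mul_nonneg_left ((abs_nonneg _).trans (ha n j hj1 hjn))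
    (Real.rpow_pos_of_pos (by linarith) q)
  have hpow := rpow_le_two_rpow_mul_rpow hx (le_max_left q 0)
  calc 1 / (n : ℝ) * (|a n j| * ε j)
      ≤ 1 / (n : ℝ) * ((C * (2 ^ (r - q) * ((n : ℝ) / (j + 1)) ^ r)) * ε j) := by
        gcongr
        · exact hε0 j
        · exact (ha n j hj1 hjn).trans (by gcongr)
    _ = C * 2 ^ (r - q) * (1 / (n : ℝ) * ((n : ℝ) / (j + 1)) ^ r * ε j) := by ring

section
variable {Ω : Type*} {m0 : MeasurableSpace Ω} {μ : Measure Ω}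

theorem condExp_sq_sum_mul_ae_eq {ι : Type*} [Fintype ι] {m : MeasurableSpace Ω}
    {X : ι → Ω → ℝ} (hX : ∀ i, MemLp (X i) 2 μ) (c : ι → ℝ) :
    μ[fun ω => (∑ i, c i * X i ω) ^ 2 | m] =ᵐ[μ]
      fun ω => ∑ i, ∑ l, c i * c l * μ[fun ω => X i ω * X l ω | m] ω := by
  have hexpand : (fun ω => (∑ i, c i * X i ω) ^ 2)
      = ∑ P : ι × ι, (c P.1 * c P.2) • (X P.1 * X P.2) := by
    ext ω
    simp only [sq, sum_mul_sum, Finset.sum_apply, Pi.smul_apply, Pi.mul_apply, smul_eq_mul,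
      Fintype.sum_prod_type]
    exact sum_congr rfl fun i _ => sum_congr rfl fun l _ => by ring
  have hsum := condExp_finsetSum (m := m) (s := univ)
    (fun (P : ι × ι) _ => ((hX P.1).integrable_mul (hX P.2)).smul (c P.1 * c P.2))
  have hsmul := ae_all_iff.2 fun P : ι × ι =>
    condExp_smul (μ := μ) (c P.1 * c P.2) (X P.1 * X P.2) m
  rw [hexpand]
  filter_upwards [hsum, hsmul] with ω hω hωP
  rw [hω]
  simp only [Finset.sum_apply, hωP, Pi.smul_apply, smul_eq_mul, Fintype.sum_prod_type]
  rfl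

theorem integral_abs_sum_le {ι : Type*} (s : Finset ι) {f : ι → Ω → ℝ}
    (hf : ∀ i ∈ s, Integrable (f i) μ) :
    ∫ ω, |∑ i ∈ s, f i ω| ∂μ ≤ ∑ i ∈ s, ∫ ω, |f i ω| ∂μ := by
  rw [← integral_finsetSum s fun i hi => (hf i hi).abs]
  exact integral_mono (integrable_finsetSum s hf).abs
    (integrable_finsetSum s fun i hi => (hf i hi).abs) fun ω => abs_sum_le_sum_abs _ _

theorem tendsto_integral_abs_finset_sum {ι : Type*} (s : Finset ι) {f : ι → ℕ → Ω → ℝ}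
    (hf : ∀ i ∈ s, ∀ n, Integrable (f i n) μ)
    (hf0 : ∀ i ∈ s, Tendsto (fun n => ∫ ω, |f i n ω| ∂μ) atTop (𝓝 0)) :
    Tendsto (fun n => ∫ ω, |∑ i ∈ s, f i n ω| ∂μ) atTop (𝓝 0) := by
  refine squeeze_zero (fun n => integral_nonneg fun ω => abs_nonneg _)
    (fun n => integral_abs_sum_le s fun i hi => hf i hi n) ?_
  simpa using tendsto_finsetSum s hf0

theorem tendsto_integral_abs_const_add [IsFiniteMeasure μ] {c : ℕ → ℝ} {f : ℕ → Ω → ℝ}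
    (hc : Tendsto c atTop (𝓝 0)) (hf : ∀ n, Integrable (f n) μ)
    (hf0 : Tendsto (fun n => ∫ ω, |f n ω| ∂μ) atTop (𝓝 0)) :
    Tendsto (fun n => ∫ ω, |c n + f n ω| ∂μ) atTop (𝓝 0) := by
  have hbound : ∀ n, ∫ ω, |c n + f n ω| ∂μ ≤ μ.real Set.univ * |c n| + ∫ ω, |f n ω| ∂μ := by
    intro n
    calc ∫ ω, |c n + f n ω| ∂μ ≤ ∫ ω, (|c n| + |f n ω|) ∂μ :=
          integral_mono ((integrable_const _).add (hf n)).abs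
            ((integrable_const _).add (hf n).abs) fun ω => abs_add_le _ _
      _ = μ.real Set.univ * |c n| + ∫ ω, |f n ω| ∂μ := by
          rw [integral_add (integrable_const _) (hf n).abs, integral_const, smul_eq_mul]
  refine squeeze_zero (fun n => integral_nonneg fun ω => abs_nonneg _) hbound ?_
  simpa using (hc.abs.const_mul _).add hf0

theorem tendsto_integral_abs_one_div_mul_sum_mul [IsFiniteMeasure μ] {q C : ℝ} (hq : q < 1)
    {a : ℕ → ℕ → ℝ} (ha : ∀ n j : ℕ, 1 ≤ j → j ≤ n → |a n j| ≤ C * ((n : ℝ) / (j + 1)) ^ q)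
    {Y : ℕ → Ω → ℝ} (hY : ∀ j, Integrable (Y j) μ)
    (hY0 : Tendsto (fun j => ∫ ω, |Y j ω| ∂μ) atTop (𝓝 0)) :
    Tendsto (fun n : ℕ => ∫ ω, |1 / (n : ℝ) * ∑ j ∈ Icc 1 n, a n j * Y j ω| ∂μ) atTop (𝓝 0) := by
  refine squeeze_zero (fun n => integral_nonneg fun ω => abs_nonneg _) (fun n => ?_)
    (tendsto_one_div_mul_sum_abs_mul_of_abs_le_rpow hq ha
      (fun j => integral_nonneg fun ω => abs_nonneg _) hY0)
  calc ∫ ω, |1 / (n : ℝ) * ∑ j ∈ Icc 1 n, a n j * Y j ω| ∂μ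
      = 1 / (n : ℝ) * ∫ ω, |∑ j ∈ Icc 1 n, a n j * Y j ω| ∂μ := by
        simp only [abs_mul, abs_of_nonneg (by positivity : (0 : ℝ) ≤ 1 / n)]
        exact integral_const_mul _ _
    _ ≤ 1 / (n : ℝ) * ∑ j ∈ Icc 1 n, ∫ ω, |a n j * Y j ω| ∂μ := by
        gcongr
        exact integral_abs_sum_le _ fun j _ => (hY j).const_mul _
    _ = 1 / (n : ℝ) * ∑ j ∈ Icc 1 n, |a n j| * ∫ ω, |Y j ω| ∂μ := by
        simp only [abs_mul, integral_const_mul]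

theorem tendsto_integral_abs_one_div_mul_sum_mul_sub [IsFiniteMeasure μ] {q C B θ : ℝ}
    (hq : q < 1)
    {a : ℕ → ℕ → ℝ} (ha : ∀ n j : ℕ, 1 ≤ j → j ≤ n → |a n j| ≤ C * ((n : ℝ) / (j + 1)) ^ q)
    (haB : Tendsto (fun n : ℕ => 1 / (n : ℝ) * ∑ j ∈ Icc 1 n, a n j) atTop (𝓝 B))
    {G : ℕ → Ω → ℝ} (hG : ∀ j, Integrable (G j) μ)
    (hGθ : Tendsto (fun j => ∫ ω, |G j ω - θ| ∂μ) atTop (𝓝 0)) :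
    Tendsto (fun n : ℕ => ∫ ω, |1 / (n : ℝ) * ∑ j ∈ Icc 1 n, a n j * G j ω - B * θ| ∂μ)
      atTop (𝓝 0) := by
  have hsplit : ∀ (n : ℕ) ω, 1 / (n : ℝ) * ∑ j ∈ Icc 1 n, a n j * G j ω - B * θ
      = (1 / (n : ℝ) * ∑ j ∈ Icc 1 n, a n j - B) * θ
        + 1 / (n : ℝ) * ∑ j ∈ Icc 1 n, a n j * (G j ω - θ) := by
    intro n ω
    simp only [mul_sub, sum_sub_distrib, ← sum_mul]
    ring
  simp only [hsplit]
  refine tendsto_integral_abs_const_add ?_ (fun n => by fun_prop) ?_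
  · simpa using (haB.sub_const B).mul_const θ
  · exact tendsto_integral_abs_one_div_mul_sum_mul hq ha
      (fun j => (hG j).sub (integrable_const θ)) hGθ

end

theorem conditional_variance_condition_general
    {Ω : Type*} {m0 : MeasurableSpace Ω} (μ : Measure Ω) [IsProbabilityMeasure μ]
    (ℱ : Filtration ℕ m0)
    (N : ℕ)
    (M : Fin N → ℕ → Ω → ℝ)
    (hL2 : ∀ i j, MemLp (M i j) 2 μ)
    (θ : Fin N → Fin N → ℝ)
    (hθ : ∀ i l, Tendsto
      (fun j : ℕ =>
        ∫ ω, |(μ[(fun ω => M i j ω * M l j ω) | ℱ (j - 1)]) ω - θ i l| ∂μ)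
      atTop (nhds 0))
    (p : Fin N → ℝ) (hp : ∀ i, p i < 1 / 2) (K : ℝ)
    (b : Fin N → ℕ → ℕ → ℝ)
    (hb : ∀ i, ∀ n j : ℕ, 1 ≤ j → j ≤ n →
      |b i n j| ≤ K * ((n : ℝ) / ((j : ℝ) + 1)) ^ (p i))
    (B : Fin N → Fin N → ℝ)
    (hB : ∀ i l, Tendsto
      (fun n : ℕ => (1 / (n : ℝ)) * ∑ j ∈ Finset.Icc 1 n, b i n j * b l n j)
      atTop (nhds (B i l))) :
    Tendsto
      (fun n : ℕ =>
        ∫ ω, |(1 / (n : ℝ)) * ∑ j ∈ Finset.Icc 1 n,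
            (μ[(fun ω => (∑ i, b i n j * M i j ω) ^ 2) | ℱ (j - 1)]) ω
          - ∑ i, ∑ l, B i l * θ i l| ∂μ)
      atTop (nhds 0) := by
  have hdecomp : ∀ n : ℕ, (fun ω => 1 / (n : ℝ) * ∑ j ∈ Icc 1 n,
        μ[fun ω => (∑ i, b i n j * M i j ω) ^ 2 | ℱ (j - 1)] ω - ∑ i, ∑ l, B i l * θ i l)
      =ᵐ[μ] fun ω => ∑ i, ∑ l, (1 / (n : ℝ) * ∑ j ∈ Icc 1 n,
        b i n j * b l n j * μ[fun ω => M i j ω * M l j ω | ℱ (j - 1)] ω - B i l * θ i l) := by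
    intro n
    filter_upwards [ae_all_iff.2 fun j =>
      condExp_sq_sum_mul_ae_eq (m := ℱ (j - 1)) (fun i => hL2 i j) fun i => b i n j] with ω hω
    simp only [hω, mul_sum, sum_sub_distrib]
    rw [sum_comm]
    exact congrArg₂ _ (sum_congr rfl fun i _ => sum_comm) rfl
  refine (tendsto_congr fun n => integral_congr_ae ((hdecomp n).fun_comp abs)).2 ?_
  refine tendsto_integral_abs_finset_sum _ (fun i _ n => by fun_prop) fun i _ => ?_
  refine tendsto_integral_abs_finset_sum _ (fun l _ n => by fun_prop) fun l _ => ?_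
  exact tendsto_integral_abs_one_div_mul_sum_mul_sub (by linarith [hp i, hp l])
    (fun n j hj hjn => abs_mul_le_mul_rpow_add
      (div_pos (Nat.cast_pos.2 (hj.trans hjn)) (by positivity)) (hb i n j hj hjn) (hb l n j hj hjn))
    (hB i l) (fun j => integrable_condExp) (hθ i l)

/-- Conditional variance condition: if the conditional products
`E[M⁽ⁱ⁾_j M⁽ˡ⁾_j | F_{j−1}]` converge in `L¹` to constants `θ_{i,l}`, the coefficients
satisfy `|b⁽ⁱ⁾_{j,n}| ≤ K (n/(j+1))^{p_i}` with `p_i < 1/2`, and the Cesàro averages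
`(1/n) ∑_j b⁽ⁱ⁾_{j,n} b⁽ˡ⁾_{j,n}` converge to `B_{i,l}`, then
`(1/n) ∑_{j=1}^n E[(∑_i b⁽ⁱ⁾_{j,n} M⁽ⁱ⁾_j)² | F_{j−1}]` converges in `L¹` to
`∑_i ∑_l B_{i,l} θ_{i,l}`. -/
theorem conditional_variance_condition
    {Ω : Type*} {m0 : MeasurableSpace Ω} (μ : Measure Ω) [IsProbabilityMeasure μ]
    (ℱ : Filtration ℕ m0)
    (N : ℕ) (hN : 1 ≤ N)
    (M : Fin N → ℕ → Ω → ℝ)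
    (hadapt : ∀ i, Adapted ℱ (M i))
    (hL2 : ∀ i j, MemLp (M i j) 2 μ)
    (θ : Fin N → Fin N → ℝ)
    (hθ : ∀ i l, Tendsto
      (fun j : ℕ =>
        ∫ ω, |(μ[(fun ω => M i j ω * M l j ω) | ℱ (j - 1)]) ω - θ i l| ∂μ)
      atTop (nhds 0))
    (p : Fin N → ℝ) (hp : ∀ i, p i < 1 / 2) (K : ℝ) (hK : 0 < K)
    (b : Fin N → ℕ → ℕ → ℝ)
    (hb : ∀ i, ∀ n j : ℕ, 1 ≤ j → j ≤ n →
      |b i n j| ≤ K * ((n : ℝ) / ((j : ℝ) + 1)) ^ (p i))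
    (B : Fin N → Fin N → ℝ)
    (hB : ∀ i l, Tendsto
      (fun n : ℕ => (1 / (n : ℝ)) * ∑ j ∈ Finset.Icc 1 n, b i n j * b l n j)
      atTop (nhds (B i l))) :
    Tendsto
      (fun n : ℕ =>
        ∫ ω, |(1 / (n : ℝ)) * ∑ j ∈ Finset.Icc 1 n,
            (μ[(fun ω => (∑ i, b i n j * M i j ω) ^ 2) | ℱ (j - 1)]) ω
          - ∑ i, ∑ l, B i l * θ i l| ∂μ)
      atTop (nhds 0) :=
  conditional_variance_condition_general μ ℱ N M hL2 θ hθ p hp K b hb B hB
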